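/- Let g ≡ 0 (mod 3), s ≡ 2 (mod 3), g,n ≥ 3, and λ ∈ {1,2}, and suppose there exists a PCS(g^n : s). Set l = 1 if g = 3 and l = 2 if g > 3. Suppose further that: (i) there exist l pairwise disjoint simple S_3(2,3,g+s)s on a (g+s)-set X such that no block of any of them is contained in a fixed s-subset Y of X; and (ii) there exists an NWBTS(g+s;c) where (g+s,c) satisfies condition (C1) with associated pair (λ,ε). Then for every integer q with 0 ≤ q ≤ l(n−1), there exists an NWBTS(gn+s; b) with b = q·binom(gn+s,2) + b′, where b′ is the integer with 3b′ = λ·binom(gn+s,2) + ε. -/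

import Mathlib

namespace DataPlacement

open Finset

variable {α : Type*} [DecidableEq α]

/-- Number of blocks of the family `F` (with multiplicity) containing `T`. -/
def lamF (F : Multiset (Finset α)) (T : Finset α) : ℕ :=
  Multiset.card (F.filter fun B => T ⊆ B)

/-- Triple system with `b` blocks on a point set `X` of size `v`. -/
def IsTSOn (X : Finset α) (v b : ℕ) (F : Multiset (Finset α)) : Prop :=
  X.card = v ∧ Multiset.card F = b ∧ ∀ B ∈ F, B.card = 3 ∧ B ⊆ X

/-- `(l, e)` is the pair associated with `(v, b)`:
`3b = l·v(v−1)/2 + e` with `−v/2 < e < v/2`. -/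
def AssocPair (v b l : ℕ) (e : ℤ) : Prop :=
  6 * (b : ℤ) = (l : ℤ) * v * ((v : ℤ) - 1) + 2 * e ∧
    -(v : ℤ) < 2 * e ∧ 2 * e < (v : ℤ)

/-- Condition (C1). -/
def CondC1 (v b : ℕ) : Prop :=
  v % 3 = 2 ∧ ∃ l : ℕ, 0 < l ∧
    ((v % 6 = 5 ∧ (l % 3 = 1 ∨ l % 3 = 2)) ∨
     (v % 6 = 2 ∧ (l % 6 = 2 ∨ l % 6 = 4))) ∧
    (b = l * v * (v - 1) / 6 ∨ b = (l * v * (v - 1) + 5) / 6)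

/-- Condition (C2). -/
def CondC2 (v b : ℕ) : Prop :=
  v % 2 = 0 ∧ ∃ l : ℕ, 0 < l ∧ l % 2 = 1 ∧
    (l : ℤ) * v * ((v : ℤ) - 1) - v < 6 * (b : ℤ) ∧
    6 * (b : ℤ) < (l : ℤ) * v * ((v : ℤ) - 1) + v

/-- Pairs of points of `X` whose block count equals `l + i`. -/
def Dlev (X : Finset α) (F : Multiset (Finset α)) (l : ℕ) (i : ℤ) :
    Finset (Finset α) :=
  (X.powersetCard 2).filter fun p => (lamF F p : ℤ) = (l : ℤ) + i

/-- Every pair of points of `X` lies in `l−1`, `l`, or `l+1` blocks. -/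
def PairRangeOn (X : Finset α) (F : Multiset (Finset α)) (l : ℕ) : Prop :=
  ∀ p ∈ X.powersetCard 2,
    (l : ℤ) - 1 ≤ (lamF F p : ℤ) ∧ (lamF F p : ℤ) ≤ (l : ℤ) + 1

def IsTriangle (D : Finset (Finset α)) : Prop :=
  ∃ x y z : α, x ≠ y ∧ x ≠ z ∧ y ≠ z ∧
    D = {({x, y} : Finset α), {y, z}, {x, z}}

def IsFourCycle (D : Finset (Finset α)) : Prop :=
  ∃ x y z w : α, x ≠ y ∧ x ≠ z ∧ x ≠ w ∧ y ≠ z ∧ y ≠ w ∧ z ≠ w ∧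
    D = {({x, y} : Finset α), {y, z}, {z, w}, {x, w}}

/-- `D` is a perfect matching on the point set `X`. -/
def IsPerfectMatchingOn (X : Finset α) (D : Finset (Finset α)) : Prop :=
  (∀ p ∈ D, p.card = 2 ∧ p ⊆ X) ∧ ∀ x ∈ X, ∃! p, p ∈ D ∧ x ∈ p

/-- Defect-graph shape required for nearly 2-balance under (C1). -/
def C1ShapeOn (X : Finset α) (F : Multiset (Finset α)) (l : ℕ) (e : ℤ) : Prop :=
  (e = 1 ∧ IsTriangle (Dlev X F l 1 ∪ Dlev X F l (-1)) ∧
     (Dlev X F l 1).card = 2 ∧ (Dlev X F l (-1)).card = 1) ∨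
  (e = -1 ∧ IsTriangle (Dlev X F l 1 ∪ Dlev X F l (-1)) ∧
     (Dlev X F l 1).card = 1 ∧ (Dlev X F l (-1)).card = 2) ∨
  (e = 2 ∧ IsFourCycle (Dlev X F l 1 ∪ Dlev X F l (-1)) ∧
     (Dlev X F l 1).card = 3 ∧ (Dlev X F l (-1)).card = 1) ∨
  (e = -2 ∧ IsFourCycle (Dlev X F l 1 ∪ Dlev X F l (-1)) ∧
     (Dlev X F l 1).card = 1 ∧ (Dlev X F l (-1)).card = 3)

/-- Defect-graph shape required for nearly 2-balance under (C2)
(here `v = X.card`). -/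
def C2ShapeOn (X : Finset α) (v : ℕ) (F : Multiset (Finset α)) (l : ℕ) (e : ℤ) : Prop :=
  (((v : ℤ) - 2 * e) % 4 = 0 ∧
    IsPerfectMatchingOn X (Dlev X F l 1 ∪ Dlev X F l (-1)) ∧
    4 * ((Dlev X F l 1).card : ℤ) = (v : ℤ) + 2 * e ∧
    4 * ((Dlev X F l (-1)).card : ℤ) = (v : ℤ) - 2 * e) ∨
  (((v : ℤ) - 2 * e) % 4 ≠ 0 ∧
    ∃ (c a₂ a₃ a₄ : α) (star : Finset (Finset α)),
      c ∈ X ∧ a₂ ∈ X ∧ a₃ ∈ X ∧ a₄ ∈ X ∧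
      c ≠ a₂ ∧ c ≠ a₃ ∧ c ≠ a₄ ∧ a₂ ≠ a₃ ∧ a₂ ≠ a₄ ∧ a₃ ≠ a₄ ∧
      star = {({c, a₂} : Finset α), {c, a₃}, {c, a₄}} ∧
      star ⊆ Dlev X F l 1 ∪ Dlev X F l (-1) ∧
      IsPerfectMatchingOn (X \ {c, a₂, a₃, a₄})
        ((Dlev X F l 1 ∪ Dlev X F l (-1)) \ star) ∧
      (((star ∩ Dlev X F l 1).card = 2 ∧ (star ∩ Dlev X F l (-1)).card = 1 ∧
          4 * (((Dlev X F l 1) \ star).card : ℤ) = (v : ℤ) - 6 + 2 * e ∧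
          4 * (((Dlev X F l (-1)) \ star).card : ℤ) = (v : ℤ) - 2 - 2 * e) ∨
        ((star ∩ Dlev X F l 1).card = 1 ∧ (star ∩ Dlev X F l (-1)).card = 2 ∧
          4 * (((Dlev X F l 1) \ star).card : ℤ) = (v : ℤ) - 2 + 2 * e ∧
          4 * (((Dlev X F l (-1)) \ star).card : ℤ) = (v : ℤ) - 6 - 2 * e)))

/-- `F` is 3-balanced on `X`: the multiplicities of any two triples of `X`
differ by at most one. -/
def ThreeBalancedOn (X : Finset α) (F : Multiset (Finset α)) : Prop :=
  ∀ T₁ ∈ X.powersetCard 3, ∀ T₂ ∈ X.powersetCard 3, F.count T₁ ≤ F.count T₂ + 1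

/-- Nearly well-balanced triple system NWBTS(v;b) on the point set `X`. -/
def IsNWBTSOn (X : Finset α) (v b : ℕ) (F : Multiset (Finset α)) : Prop :=
  IsTSOn X v b F ∧ ThreeBalancedOn X F ∧
  ∃ (l : ℕ) (e : ℤ), 0 < l ∧ AssocPair v b l e ∧ PairRangeOn X F l ∧
    ((CondC1 v b ∧ C1ShapeOn X F l e) ∨ (CondC2 v b ∧ C2ShapeOn X v F l e))

/-- `B` is an S_mu(2,3,·) design on the point set `X`. -/
def IsSDesignOn (X : Finset α) (mu : ℕ) (B : Multiset (Finset α)) : Prop :=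
  (∀ A ∈ B, A.card = 3 ∧ A ⊆ X) ∧ ∀ p ∈ X.powersetCard 2, lamF B p = mu

/-- `B` is a GDD_mu(2,3,·) of type `1^{·}u^1` on `X` with long group `U`. -/
def IsGDD1u (X : Finset α) (mu u : ℕ) (U : Finset α) (B : Multiset (Finset α)) : Prop :=
  U ⊆ X ∧ U.card = u ∧
  (∀ A ∈ B, A.card = 3 ∧ A ⊆ X ∧ (A ∩ U).card ≤ 1) ∧
  ∀ p ∈ X.powersetCard 2, ¬ p ⊆ U → lamF B p = mu

/-- `B` is a GDD_mu(2,3,·) with group family `G`. -/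
def IsGDDgroups (mu : ℕ) {n : ℕ} (G : Fin n → Finset α) (B : Multiset (Finset α)) : Prop :=
  (∀ A ∈ B, A.card = 3 ∧ A ⊆ Finset.univ.biUnion G ∧ ∀ i, (A ∩ G i).card ≤ 1) ∧
  ∀ x y : α, x ≠ y → (∃ i j, i ≠ j ∧ x ∈ G i ∧ y ∈ G j) → lamF B {x, y} = mu

/-- Nearly group divisible design NGDD(2,3,·) of type `2^{(m,n)}u^1` on `X`. -/
def IsNGDD (X : Finset α) (m n u : ℕ) (G : Fin (m + n) → Finset α) (U : Finset α)
    (B : Multiset (Finset α)) : Prop :=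
  (∀ i, (G i).card = 2 ∧ G i ⊆ X) ∧ U.card = u ∧ U ⊆ X ∧
  (∀ i j, i ≠ j → Disjoint (G i) (G j)) ∧ (∀ i, Disjoint (G i) U) ∧
  U ∪ Finset.univ.biUnion G = X ∧
  (∀ A ∈ B, A.card = 3 ∧ A ⊆ X) ∧
  (∀ i : Fin (m + n), (i : ℕ) < m → lamF B (G i) = 2) ∧
  (∀ i : Fin (m + n), m ≤ (i : ℕ) → lamF B (G i) = 0) ∧
  (∀ p ∈ U.powersetCard 2, lamF B p = 0) ∧
  (∀ p ∈ X.powersetCard 2, (∀ i, ¬ p ⊆ G i) → ¬ p ⊆ U → lamF B p = 1)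

/-- Candelabra system CS(g^n : s) on `X` with stem `S` and groups `G`. -/
def IsCS (X : Finset α) (g n s : ℕ) (S : Finset α) (G : Fin n → Finset α)
    (A : Multiset (Finset α)) : Prop :=
  S.card = s ∧ S ⊆ X ∧ (∀ i, (G i).card = g ∧ G i ⊆ X) ∧
  (∀ i j, i ≠ j → Disjoint (G i) (G j)) ∧ (∀ i, Disjoint (G i) S) ∧
  S ∪ Finset.univ.biUnion G = X ∧
  (∀ B ∈ A, B.card = 3 ∧ B ⊆ X) ∧
  (∀ T ∈ X.powersetCard 3, (∀ i, ¬ T ⊆ S ∪ G i) → lamF A T = 1) ∧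
  (∀ T ∈ X.powersetCard 3, (∃ i, T ⊆ S ∪ G i) → lamF A T = 0)

/-- Partitionable candelabra system PCS(g^n : s). -/
def IsPCS (X : Finset α) (g n s : ℕ) (S : Finset α) (G : Fin n → Finset α)
    (A : Multiset (Finset α)) : Prop :=
  IsCS X g n s S G A ∧
  ∃ (Ax : α → Multiset (Finset α)) (Ai : Fin (s - 2) → Multiset (Finset α)),
    A = (∑ p ∈ X \ S, Ax p) + ∑ i, Ai i ∧
    (∀ i : Fin n, ∀ p ∈ G i, IsGDD1u X 1 (g + s) (G i ∪ S) (Ax p)) ∧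
    (∀ j, IsGDDgroups 1 G (Ai j))

/-- g-PCS_2((2ag)^n : s). -/
def IsGPCS2 (X : Finset α) (a g n s : ℕ) (S : Finset α) (G : Fin n → Finset α)
    (A : Multiset (Finset α)) : Prop :=
  IsCS X (2 * a * g) n s S G A ∧
  ∃ (P : Fin (g * n) → Multiset (Finset α)) (grp : Fin (g * n) → Fin n),
    (∑ i, P i) ≤ A ∧
    (∀ j : Fin n, (Finset.univ.filter fun i => grp i = j).card = g) ∧
    (∀ i, IsGDD1u X 2 (2 * a * g + s) (G (grp i) ∪ S) (P i))

/-- g-PCS_2^r((2ag)^n : s). -/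
def IsGPCS2r (X : Finset α) (a g n s r : ℕ) (S : Finset α) (G : Fin n → Finset α)
    (A : Multiset (Finset α)) : Prop :=
  IsCS X (2 * a * g) n s S G A ∧
  ∃ (P : Fin (g * n) → Multiset (Finset α)) (grp : Fin (g * n) → Fin n),
    (∑ i, P i) ≤ A ∧
    (∀ j : Fin n, (Finset.univ.filter fun i => grp i = j).card = g) ∧
    (∀ i, IsGDD1u X 2 (2 * a * g + s) (G (grp i) ∪ S) (P i)) ∧
    ∃ (i : Fin (g * n)) (N : Multiset (Finset α))
      (Gs : Fin (r + (a * g * (n - 1) - r)) → Finset α),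
      N ≤ P i ∧ IsNGDD X r (a * g * (n - 1) - r) (2 * a * g + s) Gs (G (grp i) ∪ S) N

/-- GDD(3,3,·) of type `g^k` on `X` with groups `H`. -/
def IsGDD3On (X : Finset α) (g : ℕ) {k : ℕ} (H : Fin k → Finset α)
    (A : Multiset (Finset α)) : Prop :=
  (∀ i, (H i).card = g ∧ H i ⊆ X) ∧ (∀ i j, i ≠ j → Disjoint (H i) (H j)) ∧
  Finset.univ.biUnion H = X ∧
  (∀ B ∈ A, B.card = 3 ∧ B ⊆ X ∧ ∀ i, (B ∩ H i).card ≤ 1) ∧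
  (∀ T ∈ X.powersetCard 3, (∀ i, (T ∩ H i).card ≤ 1) → lamF A T = 1)

/-- `B` is a GDD_mu(2,3,·) on the points not in the omitted group `H o`,
with group set `{H i : i ≠ o}`. -/
def IsGDDOmit (mu : ℕ) {k : ℕ} (H : Fin k → Finset α) (o : Fin k)
    (B : Multiset (Finset α)) : Prop :=
  (∀ A ∈ B, A.card = 3 ∧ Disjoint A (H o) ∧ ∀ i, (A ∩ H i).card ≤ 1) ∧
  ∀ x y : α, x ≠ y →
    (∃ i j, i ≠ j ∧ i ≠ o ∧ j ≠ o ∧ x ∈ H i ∧ y ∈ H j) → lamF B {x, y} = mu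

/-- PGDD_2((2g)^{n+1}). -/
def IsPGDD2 (g n : ℕ) (H : Fin (n + 1) → Finset (Fin (2 * g * (n + 1))))
    (A : Multiset (Finset (Fin (2 * g * (n + 1))))) : Prop :=
  IsGDD3On Finset.univ (2 * g) H A ∧
  ∃ (i0 : Fin (n + 1))
    (P : Fin (g * n + 2 * g) → Multiset (Finset (Fin (2 * g * (n + 1)))))
    (f : Fin (g * n + 2 * g) → Fin (n + 1)),
    A = ∑ i, P i ∧
    (∀ j, j ≠ i0 → (Finset.univ.filter fun i => f i = j).card = g) ∧
    (∀ i, f i ≠ i0 → IsGDDOmit 2 H (f i) (P i)) ∧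
    (∀ i, f i = i0 → IsGDDOmit 1 H i0 (P i))

/-- 1-FG(3,(K1,KT),n) of type 1^n. -/
def Is1FG (n : ℕ) (K1 KT : Set ℕ) (A1 AT : Multiset (Finset (Fin n))) : Prop :=
  (∀ B ∈ A1, B.card ∈ K1) ∧ (∀ B ∈ AT, B.card ∈ KT) ∧
  (∀ p ∈ (Finset.univ : Finset (Fin n)).powersetCard 2, lamF A1 p = 1) ∧
  (∀ T ∈ (Finset.univ : Finset (Fin n)).powersetCard 3, lamF (A1 + AT) T = 1)

/-- PICS_2^r((2g)^3 : 0). -/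
def IsPICS2 (g r : ℕ) (G : Fin 3 → Finset (Fin (6 * g)))
    (A : Multiset (Finset (Fin (6 * g)))) : Prop :=
  IsCS Finset.univ (2 * g) 3 0 (∅ : Finset (Fin (6 * g))) G A ∧
  ∃ P : Fin (4 * g - 2) → Multiset (Finset (Fin (6 * g))),
    A = ∑ i, P i ∧
    (∀ i : Fin (4 * g - 2), (i : ℕ) < 2 * g → IsSDesignOn Finset.univ 2 (P i)) ∧
    (∃ i : Fin (4 * g - 2), (i : ℕ) < 2 * g ∧
      ∃ (N : Multiset (Finset (Fin (6 * g))))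
        (Gs : Fin (r + (3 * g - r)) → Finset (Fin (6 * g))),
        N ≤ P i ∧ IsNGDD Finset.univ r (3 * g - r) 0 Gs ∅ N) ∧
    (∀ i : Fin (4 * g - 2), 2 * g ≤ (i : ℕ) → IsGDDgroups 1 G (P i))

/-- Number of ordered pairs of blocks of `F` whose intersection has exactly
`j` points. -/
def interCount (F : Multiset (Finset α)) (j : ℕ) : ℕ :=
  Multiset.card
    ((F.bind fun A => F.map fun B => (A, B)).filter fun p => (p.1 ∩ p.2).card = j)

/-- The polynomial `P(F, x) = Σ_{j=0}^{3} v_j x^j`. -/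
noncomputable def Pval (F : Multiset (Finset α)) (x : ℝ) : ℝ :=
  ∑ j ∈ Finset.range 4, (interCount F j : ℝ) * x ^ j

/-- Optimal data placement for triple replication. -/
def IsOptimalDP (v b : ℕ) (F : Multiset (Finset (Fin v))) : Prop :=
  IsTSOn Finset.univ v b F ∧
  ∀ F' : Multiset (Finset (Fin v)), IsTSOn Finset.univ v b F' →
    ∀ x : ℝ, 1 ≤ x → Pval F x ≤ Pval F' x

end DataPlacement

/-!
Put the small NWBTS into the hole `G₀ ∪ S` of the PCS and add the GDDs `𝒜_x` of `λ` points
`x ∈ G₀`: pairs inside the hole keep their multiplicities from the small system, all other pairs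
are covered `λ` times. Each of the `q` further units fills a hole `Gᵢ ∪ S`, `i ≠ 0`, with one of
the `l` disjoint `S₃` designs and adds the GDDs of three points of `Gᵢ`, which raises every pair
multiplicity by exactly 3; a group of size `g ≥ 3l` has room for `l` units. Hence the defect
graph is that of the small system and the index becomes `λ + 3q`. No block is repeated: the GDD
blocks belong to the simple candelabra system and lie in no hole, and blocks put into different
holes differ because no design block lies in the stem. A simple system is 3-balanced, and the
small one is simple because it has fewer blocks than there are triples.
-/

namespace DataPlacement

open Finset

variable {α : Type*}

section FillHoles

variable {β ι : Type*} [Fintype ι]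

/-- Hole `i`, the image of `f i`, receives a copy of `K i` and the GDDs of the points of `P i`. -/
def fillHoles (f : ι → β ↪ α) (K : ι → Multiset (Finset β))
    (Ax : α → Multiset (Finset α)) (P : ι → Finset α) : Multiset (Finset α) :=
  ∑ i, ((K i).map (Finset.map (f i)) + ∑ x ∈ P i, Ax x)

variable {f : ι → β ↪ α} {K : ι → Multiset (Finset β)} {Ax : α → Multiset (Finset α)}
  {P : ι → Finset α}

lemma card_eq_three_of_mem_fillHoles (hK : ∀ i, ∀ B ∈ K i, B.card = 3)
    (hAx : ∀ i, ∀ x ∈ P i, ∀ B ∈ Ax x, B.card = 3) :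
    ∀ B ∈ fillHoles f K Ax P, B.card = 3 := by
  intro B hB
  obtain ⟨i, -, hBi⟩ := Multiset.mem_sum.mp hB
  rcases Multiset.mem_add.mp hBi with hB | hB
  · obtain ⟨B₀, hB₀, rfl⟩ := Multiset.mem_map.mp hB
    rw [Finset.card_map, hK i B₀ hB₀]
  · obtain ⟨x, hx, hBx⟩ := Multiset.mem_sum.mp hB
    exact hAx i x hx B hBx

end FillHoles

variable [DecidableEq α]

lemma lamF_eq_countP (F : Multiset (Finset α)) (T : Finset α) :
    lamF F T = F.countP (T ⊆ ·) :=
  (Multiset.countP_eq_card_filter _ _).symm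

lemma lamF_add (F F' : Multiset (Finset α)) (T : Finset α) :
    lamF (F + F') T = lamF F T + lamF F' T := by
  simp only [lamF_eq_countP, Multiset.countP_add]

lemma lamF_sum {ι : Type*} (s : Finset ι) (F : ι → Multiset (Finset α)) (T : Finset α) :
    lamF (∑ i ∈ s, F i) T = ∑ i ∈ s, lamF (F i) T := by
  simp only [lamF_eq_countP]
  exact map_sum (Multiset.countPAddMonoidHom (T ⊆ ·)) F s

lemma lamF_map_map {β : Type*} [DecidableEq β] (f : β ↪ α) (F : Multiset (Finset β))
    (T : Finset β) :
    lamF (F.map (Finset.map f)) (T.map f) = lamF F T := by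
  simp only [lamF, Multiset.filter_map, Multiset.card_map, Function.comp_def,
    Finset.map_subset_map]

lemma lamF_eq_zero_of_forall_subset {F : Multiset (Finset α)} {U T : Finset α}
    (hF : ∀ B ∈ F, B ⊆ U) (hT : ¬ T ⊆ U) : lamF F T = 0 := by
  rw [lamF_eq_countP, Multiset.countP_eq_zero]
  exact fun B hB hTB => hT (hTB.trans (hF B hB))

lemma count_le_lamF (F : Multiset (Finset α)) (T : Finset α) : F.count T ≤ lamF F T := by
  rw [Multiset.count_eq_card_filter_eq, lamF]
  exact Multiset.card_le_card (Multiset.monotone_filter_right F fun B h => h ▸ subset_rfl)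

lemma filter_subset_powersetCard_univ [Fintype α] (B : Finset α) (k : ℕ) :
    ((univ : Finset α).powersetCard k).filter (· ⊆ B) = B.powersetCard k := by
  ext p
  simp [Finset.mem_powersetCard, and_comm]

lemma sum_lamF_powersetCard_two [Fintype α] (F : Multiset (Finset α))
    (hF : ∀ B ∈ F, B.card = 3) :
    ∑ p ∈ (univ : Finset α).powersetCard 2, lamF F p = 3 * Multiset.card F := by
  induction F using Multiset.induction with
  | empty => simp [lamF]
  | cons B F ih =>
    have hB := hF B (Multiset.mem_cons_self _ _)
    simp only [← Multiset.singleton_add, lamF_add, Finset.sum_add_distrib,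
      ih fun B' hB' => hF B' (Multiset.mem_cons_of_mem hB'), Multiset.card_add,
      Multiset.card_singleton]
    simp [lamF, Multiset.filter_singleton, apply_ite Multiset.card,
      filter_subset_powersetCard_univ, hB]
    ring

lemma card_filter_pair_subset [Fintype α] (a : α) (B : Finset α) (hB : B.card = 3) :
    ((univ.erase a).filter fun y => ({a, y} : Finset α) ⊆ B).card =
      if a ∈ B then 2 else 0 := by
  split_ifs with ha
  · have : ((univ.erase a).filter fun y => ({a, y} : Finset α) ⊆ B) = B.erase a := by
      ext y
      simp only [Finset.mem_filter, Finset.mem_erase, Finset.mem_univ, and_true,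
        Finset.insert_subset_iff, Finset.singleton_subset_iff]
      tauto
    rw [this, Finset.card_erase_of_mem ha, hB]
  · rw [Finset.card_eq_zero, Finset.filter_eq_empty_iff]
    exact fun y _ h => ha (h (Finset.mem_insert_self a {y}))

/-- Each block through `a` covers exactly two pairs through `a`. -/
lemma even_sum_lamF_pair [Fintype α] (F : Multiset (Finset α)) (hF : ∀ B ∈ F, B.card = 3)
    (a : α) : Even (∑ y ∈ univ.erase a, lamF F {a, y}) := by
  induction F using Multiset.induction with
  | empty => simp [lamF]
  | cons B F ih =>
    have hB := hF B (Multiset.mem_cons_self _ _)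
    simp only [← Multiset.singleton_add, lamF_add, Finset.sum_add_distrib]
    refine Even.add ?_ (ih fun B' hB' => hF B' (Multiset.mem_cons_of_mem hB'))
    simp only [lamF, Multiset.filter_singleton, apply_ite Multiset.card, Multiset.card_singleton,
      Multiset.empty_eq_zero, Multiset.card_zero]
    rw [← Finset.sum_filter, Finset.sum_const, smul_eq_mul, mul_one,
      card_filter_pair_subset a B hB]
    split_ifs <;> decide

lemma IsSDesignOn.even_mul_card_sub_one [Fintype α] {mu : ℕ}
    {D : Multiset (Finset α)} (hD : IsSDesignOn univ mu D) (a : α) :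
    Even (mu * (Fintype.card α - 1)) := by
  have hsum := even_sum_lamF_pair D (fun B hB => (hD.1 B hB).1) a
  rwa [Finset.sum_congr rfl fun y hy => hD.2 {a, y} (Finset.mem_powersetCard_univ.mpr
      (Finset.card_pair (Finset.ne_of_mem_erase hy).symm)),
    Finset.sum_const, Finset.card_erase_of_mem (mem_univ a), Finset.card_univ, smul_eq_mul,
    mul_comm] at hsum

lemma IsGDD1u.even_mul_card_sub_one [Fintype α] {mu u : ℕ} {U : Finset α}
    {B : Multiset (Finset α)} (hB : IsGDD1u univ mu u U B) {a : α} (ha : a ∉ U) :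
    Even (mu * (Fintype.card α - 1)) := by
  have hsum := even_sum_lamF_pair B (fun T hT => (hB.2.2.1 T hT).1) a
  rwa [Finset.sum_congr rfl fun y hy => hB.2.2.2 {a, y} (Finset.mem_powersetCard_univ.mpr
      (Finset.card_pair (Finset.ne_of_mem_erase hy).symm))
      fun h => ha (h (Finset.mem_insert_self a {y})),
    Finset.sum_const, Finset.card_erase_of_mem (mem_univ a), Finset.card_univ, smul_eq_mul,
    mul_comm] at hsum

lemma two_mul_choose_two_eq (n : ℕ) : 2 * (n.choose 2 : ℤ) = n * (n - 1) := by
  rcases n with _ | n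
  · simp
  · have h := congrArg (Nat.cast : ℕ → ℤ) (Nat.add_one_mul_choose_eq n 1)
    push_cast [Nat.choose_one_right] at h ⊢
    linear_combination -h

lemma six_mul_choose_three_eq (n : ℕ) : 6 * (n.choose 3 : ℤ) = n * (n - 1) * (n - 2) := by
  rcases n with _ | n
  · simp
  · have h := congrArg (Nat.cast : ℕ → ℤ) (Nat.add_one_mul_choose_eq n 2)
    push_cast at h ⊢
    linear_combination -2 * h + (n + 1 : ℤ) * two_mul_choose_two_eq n

lemma threeBalancedOn_of_nodup {X : Finset α} {F : Multiset (Finset α)} (hF : F.Nodup) :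
    ThreeBalancedOn X F :=
  fun T₁ _ _ _ => (Multiset.nodup_iff_count_le_one.mp hF T₁).trans (Nat.le_add_left 1 _)

/-- If some triple were repeated, 3-balance would force every triple to occur. -/
lemma nodup_of_threeBalancedOn [Fintype α] {F : Multiset (Finset α)}
    (hF : ∀ B ∈ F, B.card = 3) (hbal : ThreeBalancedOn univ F)
    (hcard : Multiset.card F < (Fintype.card α).choose 3) : F.Nodup := by
  rw [Multiset.nodup_iff_count_le_one]
  by_contra! ⟨T, hT⟩
  have hTmem : T ∈ (univ : Finset α).powersetCard 3 :=
    Finset.mem_powersetCard_univ.mpr (hF T (Multiset.count_pos.mp (by omega)))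
  have hle : ((univ : Finset α).powersetCard 3).card ≤
      ∑ T' ∈ (univ : Finset α).powersetCard 3, F.count T' := by
    rw [Finset.card_eq_sum_ones]
    exact Finset.sum_le_sum fun T' hT' => by have := hbal T hTmem T' hT'; omega
  rw [Multiset.sum_count_eq_card fun B hB => Finset.mem_powersetCard_univ.mpr (hF B hB),
    Finset.card_powersetCard, Finset.card_univ] at hle
  omega

lemma AssocPair.unique {v b l₁ l₂ : ℕ} {e₁ e₂ : ℤ} (hv : 3 ≤ v)
    (h₁ : AssocPair v b l₁ e₁) (h₂ : AssocPair v b l₂ e₂) : l₁ = l₂ ∧ e₁ = e₂ := by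
  obtain ⟨hb₁, hlo₁, hhi₁⟩ := h₁
  obtain ⟨hb₂, hlo₂, hhi₂⟩ := h₂
  have hv' : (3 : ℤ) ≤ v := by exact_mod_cast hv
  have key : ((l₁ : ℤ) - l₂) * (v * (v - 1)) = 2 * e₂ - 2 * e₁ := by
    linear_combination hb₂ - hb₁
  have hvv : 2 * (v : ℤ) ≤ v * (v - 1) := by nlinarith
  have hl : (l₁ : ℤ) = l₂ := by
    by_contra hne
    rcases lt_or_gt_of_ne hne with h | h <;> nlinarith
  refine ⟨by exact_mod_cast hl, ?_⟩
  rw [hl, sub_self, zero_mul] at key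
  omega

lemma AssocPair.lt_choose_three {u c l : ℕ} {e : ℤ} (h : AssocPair u c l e) (hl : l ≤ 2)
    (hu : 5 ≤ u) : c < u.choose 3 := by
  obtain ⟨hc, -, he⟩ := h
  have h6 := six_mul_choose_three_eq u
  have hu' : (5 : ℤ) ≤ u := by exact_mod_cast hu
  have hl' : (l : ℤ) ≤ 2 := by exact_mod_cast hl
  have : 6 * (c : ℤ) < 6 * u.choose 3 := by
    rw [h6]
    nlinarith [mul_le_mul_of_nonneg_right hl' (by nlinarith : (0 : ℤ) ≤ u * (u - 1))]
  omega

lemma C1ShapeOn.eps_cases {X : Finset α} {F : Multiset (Finset α)} {l : ℕ} {e : ℤ}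
    (h : C1ShapeOn X F l e) : e = 1 ∨ e = -1 ∨ e = 2 ∨ e = -2 := by
  rcases h with ⟨he, -⟩ | ⟨he, -⟩ | ⟨he, -⟩ | ⟨he, -⟩ <;> simp [he]

lemma condC1_of_assocPair {v b l : ℕ} {e : ℤ} (hv : v % 6 = 5) (hl : l % 3 = 1 ∨ l % 3 = 2)
    (h : AssocPair v b l e) (he : e = 1 ∨ e = -1 ∨ e = 2 ∨ e = -2) : CondC1 v b := by
  refine ⟨by omega, l, by omega, Or.inl ⟨hv, hl⟩, ?_⟩
  have hM : ((l * v * (v - 1) : ℕ) : ℤ) = 6 * b - 2 * e := by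
    rw [Nat.cast_mul, Nat.cast_mul, Nat.cast_sub (by omega)]
    linear_combination -h.1
  omega

lemma exists_embedding_map_univ_eq {β : Type*} [Fintype β] [DecidableEq β] {Y : Finset β}
    {S T : Finset α} (hY : Y.card = S.card) (hβ : Fintype.card β = T.card + S.card)
    (hST : Disjoint T S) :
    ∃ f : β ↪ α, univ.map f = T ∪ S ∧ ∀ b, f b ∈ S → b ∈ Y := by
  have eS : {b // b ∈ Y} ≃ S := Finset.equivOfCardEq hY
  have eT : {b // b ∉ Y} ≃ T :=
    (Equiv.subtypeEquivRight fun b => Finset.mem_compl.symm).trans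
      (Finset.equivOfCardEq (by rw [Finset.card_compl, hβ, hY]; omega))
  let E : β ≃ (T ∪ S : Finset α) :=
    (Equiv.sumCompl (· ∈ Y)).symm.trans ((Equiv.sumComm _ _).trans
      ((Equiv.sumCongr eT eS).trans (Equiv.Finset.union T S hST)))
  refine ⟨⟨fun b => E b, Subtype.val_injective.comp E.injective⟩, ?_, fun b hb => ?_⟩
  · ext a
    simp only [Finset.mem_map, Finset.mem_univ, true_and, Function.Embedding.coeFn_mk]
    exact ⟨fun ⟨b, hb⟩ => hb ▸ (E b).2, fun ha => ⟨E.symm ⟨a, ha⟩, by simp⟩⟩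
  · by_contra hbY
    have hET : (E b : α) ∈ T := by
      simp [E, Equiv.sumCompl_symm_apply_of_neg hbY]
    exact Finset.disjoint_left.mp hST hET hb

lemma disjoint_map_map {β : Type*} [Fintype β] {f₁ f₂ : β ↪ α} {S : Finset α}
    {Y : Finset β} (hS : univ.map f₁ ∩ univ.map f₂ ⊆ S) (hY : ∀ b, f₂ b ∈ S → b ∈ Y)
    (M₁ : Multiset (Finset β)) {M₂ : Multiset (Finset β)} (hM₂ : ∀ B ∈ M₂, ¬ B ⊆ Y) :
    Disjoint (M₁.map (Finset.map f₁)) (M₂.map (Finset.map f₂)) := by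
  rw [Multiset.disjoint_left]
  intro T h₁ h₂
  obtain ⟨T₁, -, rfl⟩ := Multiset.mem_map.mp h₁
  obtain ⟨T₂, hT₂, hT⟩ := Multiset.mem_map.mp h₂
  refine hM₂ T₂ hT₂ fun b hb => hY b (hS (Finset.mem_inter.mpr ⟨?_, ?_⟩))
  · exact Finset.map_subset_map.mpr (subset_univ T₁) (hT ▸ Finset.mem_map_of_mem f₂ hb)
  · exact Finset.mem_map_of_mem f₂ (mem_univ b)

section PairExtension

variable {β : Type*} [DecidableEq β]

structure IsPairExtension [Fintype β] (f : β ↪ α) (F₀ : Multiset (Finset β))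
    (F : Multiset (Finset α)) (l d : ℕ) : Prop where
  lamF_map : ∀ p : Finset β, p.card = 2 → lamF F (p.map f) = lamF F₀ p + d
  lamF_of_not_subset : ∀ p : Finset α, p.card = 2 → ¬ p ⊆ univ.map f → lamF F p = l + d

lemma IsTriangle.map {D : Finset (Finset β)} (hD : IsTriangle D) (f : β ↪ α) :
    IsTriangle (D.map (Finset.mapEmbedding f).toEmbedding) := by
  obtain ⟨x, y, z, hxy, hxz, hyz, rfl⟩ := hD
  exact ⟨f x, f y, f z, f.injective.ne hxy, f.injective.ne hxz, f.injective.ne hyz, by simp⟩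

lemma IsFourCycle.map {D : Finset (Finset β)} (hD : IsFourCycle D) (f : β ↪ α) :
    IsFourCycle (D.map (Finset.mapEmbedding f).toEmbedding) := by
  obtain ⟨x, y, z, w, hxy, hxz, hxw, hyz, hyw, hzw, rfl⟩ := hD
  exact ⟨f x, f y, f z, f w, f.injective.ne hxy, f.injective.ne hxz, f.injective.ne hxw,
    f.injective.ne hyz, f.injective.ne hyw, f.injective.ne hzw, by simp⟩

variable [Fintype α] [Fintype β]

namespace IsPairExtension

variable {f : β ↪ α} {F₀ : Multiset (Finset β)} {F : Multiset (Finset α)} {l d : ℕ}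

lemma dlev_eq_map (h : IsPairExtension f F₀ F l d) {i : ℤ} (hi : i ≠ 0) :
    Dlev univ F (l + d) i = (Dlev univ F₀ l i).map (Finset.mapEmbedding f).toEmbedding := by
  ext p
  simp only [Dlev, Finset.mem_filter, Finset.mem_map, Finset.mem_powersetCard_univ,
    RelEmbedding.coe_toEmbedding, Finset.mapEmbedding_apply]
  constructor
  · rintro ⟨hp, hlev⟩
    by_cases hsub : p ⊆ univ.map f
    · obtain ⟨p₀, -, rfl⟩ := Finset.subset_map_iff.mp hsub
      rw [Finset.card_map] at hp
      refine ⟨p₀, ⟨hp, ?_⟩, rfl⟩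
      rw [h.lamF_map p₀ hp] at hlev
      push_cast at hlev ⊢
      omega
    · rw [h.lamF_of_not_subset p hp hsub] at hlev
      push_cast at hlev
      omega
  · rintro ⟨p₀, ⟨hp₀, hlev⟩, rfl⟩
    refine ⟨by rwa [Finset.card_map], ?_⟩
    rw [h.lamF_map p₀ hp₀]
    push_cast
    omega

lemma pairRangeOn (h : IsPairExtension f F₀ F l d) (h₀ : PairRangeOn univ F₀ l) :
    PairRangeOn univ F (l + d) := by
  intro p hp
  rw [Finset.mem_powersetCard_univ] at hp
  by_cases hsub : p ⊆ univ.map f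
  · obtain ⟨p₀, -, rfl⟩ := Finset.subset_map_iff.mp hsub
    rw [Finset.card_map] at hp
    have := h₀ p₀ (Finset.mem_powersetCard_univ.mpr hp)
    rw [h.lamF_map p₀ hp]
    push_cast
    omega
  · rw [h.lamF_of_not_subset p hp hsub]
    push_cast
    omega

lemma c1ShapeOn (h : IsPairExtension f F₀ F l d) {e : ℤ} (h₀ : C1ShapeOn univ F₀ l e) :
    C1ShapeOn univ F (l + d) e := by
  have hD : Dlev univ F (l + d) 1 ∪ Dlev univ F (l + d) (-1) =
      (Dlev univ F₀ l 1 ∪ Dlev univ F₀ l (-1)).map (Finset.mapEmbedding f).toEmbedding := by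
    rw [Finset.map_union, h.dlev_eq_map one_ne_zero, h.dlev_eq_map (by norm_num)]
  simp only [C1ShapeOn, hD]
  simp only [h.dlev_eq_map one_ne_zero, h.dlev_eq_map (show (-1 : ℤ) ≠ 0 by norm_num),
    Finset.card_map]
  rcases h₀ with ⟨he, hD₀, h₁⟩ | ⟨he, hD₀, h₁⟩ | ⟨he, hD₀, h₁⟩ | ⟨he, hD₀, h₁⟩
  · exact Or.inl ⟨he, hD₀.map f, h₁⟩
  · exact Or.inr <| Or.inl ⟨he, hD₀.map f, h₁⟩
  · exact Or.inr <| Or.inr <| Or.inl ⟨he, hD₀.map f, h₁⟩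
  · exact Or.inr <| Or.inr <| Or.inr ⟨he, hD₀.map f, h₁⟩

lemma three_mul_card (h : IsPairExtension f F₀ F l d) (hF : ∀ B ∈ F, B.card = 3)
    (hF₀ : ∀ B ∈ F₀, B.card = 3) :
    3 * Multiset.card F + (Fintype.card β).choose 2 * l =
      3 * Multiset.card F₀ + (Fintype.card α).choose 2 * (l + d) := by
  have hin : ∑ p ∈ (univ.powersetCard 2).filter (· ⊆ univ.map f), lamF F p =
      3 * Multiset.card F₀ + (Fintype.card β).choose 2 * d := by
    rw [filter_subset_powersetCard_univ, Finset.powersetCard_map, Finset.sum_map,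
      ← sum_lamF_powersetCard_two F₀ hF₀]
    simp only [RelEmbedding.coe_toEmbedding, Finset.mapEmbedding_apply]
    rw [Finset.sum_congr rfl fun p hp => h.lamF_map p (Finset.mem_powersetCard_univ.mp hp),
      Finset.sum_add_distrib, Finset.sum_const, Finset.card_powersetCard, Finset.card_univ,
      smul_eq_mul]
  have hout : ∑ p ∈ (univ.powersetCard 2).filter (¬ · ⊆ univ.map f), lamF F p =
      ((Fintype.card α).choose 2 - (Fintype.card β).choose 2) * (l + d) := by
    rw [Finset.sum_congr rfl fun p hp => h.lamF_of_not_subset p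
        (Finset.mem_powersetCard_univ.mp (Finset.mem_filter.mp hp).1) (Finset.mem_filter.mp hp).2,
      Finset.sum_const, smul_eq_mul, Finset.filter_not, Finset.card_sdiff_of_subset
        (Finset.filter_subset _ _), filter_subset_powersetCard_univ, Finset.powersetCard_map,
      Finset.card_map, Finset.card_powersetCard, Finset.card_powersetCard, Finset.card_univ,
      Finset.card_univ]
  have hle : (Fintype.card β).choose 2 ≤ (Fintype.card α).choose 2 :=
    Nat.choose_le_choose 2 (Fintype.card_le_of_embedding f)
  obtain ⟨k, hk⟩ := Nat.exists_eq_add_of_le hle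
  rw [← sum_lamF_powersetCard_two F hF,
    ← Finset.sum_filter_add_sum_filter_not _ (· ⊆ univ.map f), hin, hout, hk,
    Nat.add_sub_cancel_left]
  ring

lemma isNWBTSOn {q : ℕ} {e : ℤ} (h : IsPairExtension f F₀ F l (3 * q)) (hF : F.Nodup)
    (hF3 : ∀ B ∈ F, B.card = 3) (hF₀3 : ∀ B ∈ F₀, B.card = 3)
    (hassoc : AssocPair (Fintype.card β) (Multiset.card F₀) l e)
    (hrange : PairRangeOn univ F₀ l) (hshape : C1ShapeOn univ F₀ l e)
    (hv : Fintype.card α % 6 = 5) (hl : l % 3 = 1 ∨ l % 3 = 2) {b' : ℕ}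
    (hb' : 3 * (b' : ℤ) = l * ((Fintype.card α).choose 2 : ℤ) + e) :
    IsNWBTSOn univ (Fintype.card α) (q * (Fintype.card α).choose 2 + b') F := by
  have hcard := h.three_mul_card hF3 hF₀3
  have hu := two_mul_choose_two_eq (Fintype.card β)
  have hv2 := two_mul_choose_two_eq (Fintype.card α)
  have hβα : (Fintype.card β : ℤ) ≤ Fintype.card α := by
    exact_mod_cast Fintype.card_le_of_embedding f
  have hF₀card : 3 * (Multiset.card F₀ : ℤ) = l * (Fintype.card β).choose 2 + e := by
    linarith [hassoc.1, congrArg ((l : ℤ) * ·) hu]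
  have hFcard : (Multiset.card F : ℤ) = q * (Fintype.card α).choose 2 + b' := by
    have hcard' : (3 * Multiset.card F + (Fintype.card β).choose 2 * l : ℤ) =
        3 * Multiset.card F₀ + (Fintype.card α).choose 2 * (l + 3 * q) := by exact_mod_cast hcard
    linarith
  have hassoc' : AssocPair (Fintype.card α) (q * (Fintype.card α).choose 2 + b') (l + 3 * q) e :=
    ⟨by push_cast; linear_combination 2 * hb' + (l + 3 * q : ℤ) * hv2,
      by linarith [hassoc.2.1], by linarith [hassoc.2.2]⟩
  refine ⟨⟨card_univ, by exact_mod_cast hFcard, fun B hB => ⟨hF3 B hB, subset_univ B⟩⟩,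
    threeBalancedOn_of_nodup hF, l + 3 * q, e, by omega, hassoc', h.pairRangeOn hrange,
    Or.inl ⟨condC1_of_assocPair hv (by omega) hassoc' hshape.eps_cases, h.c1ShapeOn hshape⟩⟩

end IsPairExtension

end PairExtension

lemma nodup_sum_of_pairwise_disjoint {β ι : Type*} {s : Finset ι} {H : ι → Multiset β}
    (hH : ∀ i ∈ s, (H i).Nodup)
    (hdisj : (s : Set ι).Pairwise fun i j => Disjoint (H i) (H j)) :
    (∑ i ∈ s, H i).Nodup := by
  classical
  induction s using Finset.induction_on with
  | empty => simp
  | insert a s ha ih =>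
    rw [Finset.sum_insert ha, Multiset.nodup_add, Multiset.disjoint_finsetSum_right]
    rw [Finset.coe_insert] at hdisj
    refine ⟨hH a (Finset.mem_insert_self a s),
      ih (fun i hi => hH i (Finset.mem_insert_of_mem hi)) (hdisj.mono (Set.subset_insert _ _)),
      fun i hi => hdisj (Set.mem_insert a _) (Set.mem_insert_of_mem a hi) ?_⟩
    rintro rfl
    exact ha hi

lemma isSDesignOn_sum {ι : Type*} {X : Finset α} {mu : ℕ} {J : Finset ι}
    {D : ι → Multiset (Finset α)} (hD : ∀ j ∈ J, IsSDesignOn X mu (D j)) :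
    IsSDesignOn X (mu * J.card) (∑ j ∈ J, D j) := by
  refine ⟨fun B hB => ?_, fun p hp => ?_⟩
  · obtain ⟨j, hj, hBj⟩ := Multiset.mem_sum.mp hB
    exact (hD j hj).1 B hBj
  · rw [lamF_sum, Finset.sum_congr rfl fun j hj => (hD j hj).2 p hp, Finset.sum_const,
      smul_eq_mul, mul_comm]

lemma IsGDD1u.lamF_pair {X U : Finset α} {mu u : ℕ} {B : Multiset (Finset α)}
    (h : IsGDD1u X mu u U B) {p : Finset α} (hp : p ∈ X.powersetCard 2) :
    lamF B p = if p ⊆ U then 0 else mu := by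
  split_ifs with hpU
  · rw [lamF_eq_countP, Multiset.countP_eq_zero]
    intro T hT hpT
    have h1 := (h.2.2.1 T hT).2.2
    have h2 := Finset.card_le_card (Finset.subset_inter hpT hpU)
    rw [(Finset.mem_powersetCard.mp hp).2] at h2
    omega
  · exact h.2.2.2 p hp hpU

lemma lamF_add_sum_of_isGDD1u {X U P : Finset α} {u : ℕ} {H : Multiset (Finset α)}
    {Ax : α → Multiset (Finset α)} (hH : ∀ B ∈ H, B ⊆ U)
    (hAx : ∀ x ∈ P, IsGDD1u X 1 u U (Ax x)) {p : Finset α} (hp : p ∈ X.powersetCard 2) :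
    lamF (H + ∑ x ∈ P, Ax x) p = if p ⊆ U then lamF H p else P.card := by
  rw [lamF_add, lamF_sum, Finset.sum_congr rfl fun x hx => (hAx x hx).lamF_pair hp]
  split_ifs with hpU
  · simp
  · simp [lamF_eq_zero_of_forall_subset hH hpU]

lemma ite_lamF_map_of_isSDesignOn {β : Type*} [DecidableEq β] [Fintype β] {g : β ↪ α} {c : ℕ}
    {D : Multiset (Finset β)} (hD : IsSDesignOn univ c D) {p : Finset α} (hp : p.card = 2) :
    (if p ⊆ univ.map g then lamF (D.map (Finset.map g)) p else c) = c := by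
  split_ifs with hpU
  · obtain ⟨p₀, -, rfl⟩ := Finset.subset_map_iff.mp hpU
    rw [lamF_map_map, hD.2 p₀ (Finset.mem_powersetCard_univ.mpr (by rwa [Finset.card_map] at hp))]
  · rfl

section FillHoles

variable {β ι : Type*} [Fintype β] [Fintype ι]
variable {f : ι → β ↪ α} {K : ι → Multiset (Finset β)} {Ax : α → Multiset (Finset α)}
  {P : ι → Finset α}

lemma lamF_fillHoles {X : Finset α} {u : ℕ}
    (hAx : ∀ i, ∀ x ∈ P i, IsGDD1u X 1 u (univ.map (f i)) (Ax x)) {p : Finset α}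
    (hp : p ∈ X.powersetCard 2) :
    lamF (fillHoles f K Ax P) p =
      ∑ i, if p ⊆ univ.map (f i) then lamF ((K i).map (Finset.map (f i))) p
        else (P i).card := by
  rw [fillHoles, lamF_sum]
  refine Finset.sum_congr rfl fun i _ => lamF_add_sum_of_isGDD1u (fun B hB => ?_) (hAx i) hp
  obtain ⟨B₀, -, rfl⟩ := Multiset.mem_map.mp hB
  exact Finset.map_subset_map.mpr (Finset.subset_univ B₀)

lemma nodup_fillHoles {R : Finset α} (hR : (∑ x ∈ R, Ax x).Nodup)
    (hhole : ∀ T ∈ ∑ x ∈ R, Ax x, ∀ i, ¬ T ⊆ univ.map (f i)) (hPR : ∀ i, P i ⊆ R)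
    (hPdisj : Pairwise fun i j => Disjoint (P i) (P j)) (hK : ∀ i, (K i).Nodup)
    (hKdisj : Pairwise fun i j =>
      Disjoint ((K i).map (Finset.map (f i))) ((K j).map (Finset.map (f j)))) :
    (fillHoles f K Ax P).Nodup := by
  rw [fillHoles, Finset.sum_add_distrib, ← Finset.sum_biUnion
    (fun i _ j _ hij => hPdisj hij), Multiset.nodup_add]
  have hsub : univ.biUnion P ⊆ R := Finset.biUnion_subset.mpr fun i _ => hPR i
  refine ⟨nodup_sum_of_pairwise_disjoint (fun i _ => (hK i).map (Finset.map_injective (f i)))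
      fun i _ j _ hij => hKdisj hij,
    Multiset.nodup_of_le (Finset.sum_le_sum_of_subset hsub) hR, ?_⟩
  rw [Multiset.disjoint_finsetSum_left]
  intro i _
  rw [Multiset.disjoint_left]
  intro T hT hTA
  obtain ⟨T₀, -, rfl⟩ := Multiset.mem_map.mp hT
  exact hhole _ (Multiset.mem_of_le (Finset.sum_le_sum_of_subset hsub) hTA) i
    (Finset.map_subset_map.mpr (Finset.subset_univ T₀))

lemma isPairExtension_fillHoles [DecidableEq β] [Fintype α] [DecidableEq ι] {u : ℕ} (i₀ : ι)
    (hAx : ∀ i, ∀ x ∈ P i, IsGDD1u univ 1 u (univ.map (f i)) (Ax x))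
    (hK : ∀ i ≠ i₀, IsSDesignOn univ (P i).card (K i)) :
    IsPairExtension (f i₀) (K i₀) (fillHoles f K Ax P) (P i₀).card
      (∑ i ∈ univ.erase i₀, (P i).card) := by
  have hlamF : ∀ p : Finset α, p.card = 2 → lamF (fillHoles f K Ax P) p =
      (if p ⊆ univ.map (f i₀) then lamF ((K i₀).map (Finset.map (f i₀))) p
        else (P i₀).card) +
        ∑ i ∈ univ.erase i₀, (P i).card := by
    intro p hp
    rw [lamF_fillHoles hAx (Finset.mem_powersetCard_univ.mpr hp),
      ← Finset.add_sum_erase _ _ (mem_univ i₀)]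
    congr 1
    exact Finset.sum_congr rfl fun i hi =>
      ite_lamF_map_of_isSDesignOn (hK i (Finset.ne_of_mem_erase hi)) hp
  refine ⟨fun p hp => ?_, fun p hp hpU => ?_⟩
  · rw [hlamF _ (by rwa [Finset.card_map]), if_pos (Finset.map_subset_map.mpr (subset_univ p)),
      lamF_map_map]
  · rw [hlamF p hp, if_neg hpU]

end FillHoles

lemma exists_le_sum_eq {ι : Type*} (s : Finset ι) {L q : ℕ} (hq : q ≤ L * s.card) :
    ∃ m : ι → ℕ, (∀ i, m i ≤ L) ∧ ∑ i ∈ s, m i = q := by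
  classical
  induction s using Finset.induction_on generalizing q with
  | empty => exact ⟨0, fun _ => Nat.zero_le L, by simp_all⟩
  | insert a s ha ih =>
    rw [Finset.card_insert_of_notMem ha, Nat.mul_succ] at hq
    obtain ⟨m, hmL, hm⟩ := ih (q := q - min q L) (by omega)
    refine ⟨Function.update m a (min q L), fun i => ?_, ?_⟩
    · rcases eq_or_ne i a with rfl | hi
      · simp
      · simpa [hi] using hmL i
    · rw [Finset.sum_insert ha, Function.update_self,
        Finset.sum_congr rfl fun i hi => Function.update_of_ne (ne_of_mem_of_not_mem hi ha) _ _, hm]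
      omega

section Candelabra

variable [Fintype α] {g n s : ℕ} {S : Finset α} {G : Fin n → Finset α}
  {A : Multiset (Finset α)}

lemma IsCS.not_subset_of_mem (h : IsCS univ g n s S G A) {T : Finset α} (hT : T ∈ A)
    (i : Fin n) :
    ¬ T ⊆ S ∪ G i := fun hTi => by
  obtain ⟨-, -, -, -, -, -, hA3, -, hA0⟩ := h
  have := hA0 T (Finset.mem_powersetCard_univ.mpr (hA3 T hT).1) ⟨i, hTi⟩
  have := count_le_lamF A T
  have := Multiset.count_pos.mpr hT
  omega

lemma IsCS.nodup (h : IsCS univ g n s S G A) : A.Nodup := by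
  refine Multiset.nodup_iff_count_le_one.mpr fun T => ?_
  by_cases hT : T ∈ A
  · have hhole := h.not_subset_of_mem hT
    obtain ⟨-, -, -, -, -, -, hA3, hA1, -⟩ := h
    exact hA1 T (Finset.mem_powersetCard_univ.mpr (hA3 T hT).1) hhole ▸ count_le_lamF A T
  · simp [Multiset.count_eq_zero.mpr hT]

lemma IsPCS.exists_gdd (h : IsPCS univ g n s S G A) :
    ∃ Ax : α → Multiset (Finset α),
      (∀ i, ∀ x ∈ G i, IsGDD1u univ 1 (g + s) (G i ∪ S) (Ax x)) ∧
        ∑ x ∈ univ \ S, Ax x ≤ A := by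
  obtain ⟨-, Ax, _, hA, hAx, -⟩ := h
  exact ⟨Ax, hAx, hA ▸ Multiset.le_add_right _ _⟩

/-- A point outside the long group of a GDD of index one lies on `(|X| - 1) / 2` blocks. -/
lemma IsPCS.odd_card (h : IsPCS univ g n s S G A) (hg : 0 < g) (hn : 2 ≤ n) :
    Odd (Fintype.card α) := by
  obtain ⟨Ax, hAx, -⟩ := h.exists_gdd
  obtain ⟨-, -, hG, hGG, hGS, -⟩ := h.1
  obtain ⟨x, hx⟩ := Finset.card_pos.mp ((hG ⟨0, by omega⟩).1 ▸ hg)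
  obtain ⟨a, ha⟩ := Finset.card_pos.mp ((hG ⟨1, by omega⟩).1 ▸ hg)
  have haU : a ∉ G ⟨0, by omega⟩ ∪ S := by
    rw [Finset.mem_union, not_or]
    exact ⟨Finset.disjoint_left.mp (hGG _ _ (by simp)) ha, Finset.disjoint_left.mp (hGS _) ha⟩
  obtain ⟨k, hk⟩ := (hAx _ x hx).even_mul_card_sub_one haU
  have : 0 < Fintype.card α := Fintype.card_pos_iff.mpr ⟨a⟩
  exact ⟨k, by omega⟩

end Candelabra

lemma exists_nodup_isSDesignOn_sum {β : Type*} [DecidableEq β] {X Y : Finset β} {mu L : ℕ}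
    {D : Fin L → Multiset (Finset β)}
    (hD : ∀ j, (D j).Nodup ∧ IsSDesignOn X mu (D j) ∧ ∀ B ∈ D j, ¬ B ⊆ Y)
    (hDdisj : ∀ i j, i ≠ j → Disjoint (D i) (D j)) {m : ℕ} (hm : m ≤ L) :
    ∃ E : Multiset (Finset β), E.Nodup ∧ IsSDesignOn X (mu * m) E ∧
      ∀ B ∈ E, ¬ B ⊆ Y := by
  obtain ⟨J, -, rfl⟩ := Finset.exists_subset_card_eq (s := (univ : Finset (Fin L))) (by simpa)
  refine ⟨∑ j ∈ J, D j, nodup_sum_of_pairwise_disjoint (fun j _ => (hD j).1)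
      fun j _ j' _ hjj' => hDdisj j j' hjj', isSDesignOn_sum fun j _ => (hD j).2.1,
    fun B hB => ?_⟩
  obtain ⟨j, -, hBj⟩ := Multiset.mem_sum.mp hB
  exact (hD j).2.2 B hBj

lemma IsPCS.exists_isPairExtension_fillHoles [Fintype α] {g n s : ℕ} {S : Finset α}
    {G : Fin n → Finset α} {A : Multiset (Finset α)} (hA : IsPCS univ g n s S G A)
    {β : Type*} [Fintype β] [DecidableEq β] {Y : Finset β} {f : Fin n → β ↪ α}
    (hf : ∀ i, univ.map (f i) = G i ∪ S) (hfY : ∀ i b, f i b ∈ S → b ∈ Y) (i₀ : Fin n)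
    {c : Fin n → ℕ} (hc : ∀ i, c i ≤ g) {K : Fin n → Multiset (Finset β)}
    (hK : ∀ i, (K i).Nodup ∧ ∀ B ∈ K i, B.card = 3)
    (hKdes : ∀ i ≠ i₀, IsSDesignOn univ (c i) (K i) ∧ ∀ B ∈ K i, ¬ B ⊆ Y) :
    ∃ F : Multiset (Finset α), F.Nodup ∧ (∀ B ∈ F, B.card = 3) ∧
      IsPairExtension (f i₀) (K i₀) F (c i₀) (∑ i ∈ univ.erase i₀, c i) := by
  obtain ⟨Ax, hAx, hAxA⟩ := hA.exists_gdd
  obtain ⟨-, -, hG, hGG, hGS, -⟩ := hA.1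
  have hP (i : Fin n) : ∃ P ⊆ G i, P.card = c i :=
    Finset.exists_subset_card_eq ((hG i).1 ▸ hc i)
  choose P hPG hP using hP
  have hAx' (i : Fin n) : ∀ x ∈ P i, IsGDD1u univ 1 (g + s) (univ.map (f i)) (Ax x) :=
    fun x hx => hf i ▸ hAx i x (hPG i hx)
  have hinter (i j : Fin n) (hij : i ≠ j) : univ.map (f i) ∩ univ.map (f j) ⊆ S := by
    rw [hf, hf, ← Finset.inter_union_distrib_right,
      Finset.disjoint_iff_inter_eq_empty.mp (hGG i j hij), Finset.empty_union]
  refine ⟨fillHoles f K Ax P, ?_, card_eq_three_of_mem_fillHoles (fun i => (hK i).2)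
      fun i x hx B hB => ((hAx' i x hx).2.2.1 B hB).1, ?_⟩
  · refine nodup_fillHoles (Multiset.nodup_of_le hAxA hA.1.nodup) (fun T hT i hTi => ?_)
      (fun i x hx => ?_) (fun i j hij => (hGG i j hij).mono (hPG i) (hPG j)) (fun i => (hK i).1)
      (fun i j hij => ?_)
    · rw [hf, Finset.union_comm] at hTi
      exact hA.1.not_subset_of_mem (Multiset.mem_of_le hAxA hT) i hTi
    · exact Finset.mem_sdiff.mpr ⟨mem_univ x, Finset.disjoint_left.mp (hGS i) (hPG i hx)⟩
    · by_cases hj : j = i₀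
      · exact (disjoint_map_map (hinter j i (Ne.symm hij)) (hfY i) (K j)
          (hKdes i (hj ▸ hij)).2).symm
      · exact disjoint_map_map (hinter i j hij) (hfY j) (K i) (hKdes j hj).2
  · simpa only [hP] using isPairExtension_fillHoles i₀ hAx' fun i hi => hP i ▸ (hKdes i hi).1

theorem IsPCS.exists_isPairExtension [Fintype α] {g n s : ℕ} {S : Finset α}
    {G : Fin n → Finset α} {A : Multiset (Finset α)} (hA : IsPCS univ g n s S G A)
    {β : Type*} [Fintype β] [DecidableEq β] (hβ : Fintype.card β = g + s) {Y : Finset β}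
    (hY : Y.card = s) (i₀ : Fin n) {F₀ : Multiset (Finset β)} (hF₀ : F₀.Nodup)
    (hF₀3 : ∀ B ∈ F₀, B.card = 3) {lam : ℕ} (hlam : lam ≤ g) {L : ℕ}
    {D : Fin L → Multiset (Finset β)}
    (hD : ∀ j, (D j).Nodup ∧ IsSDesignOn univ 3 (D j) ∧ ∀ B ∈ D j, ¬ B ⊆ Y)
    (hDdisj : ∀ i j, i ≠ j → Disjoint (D i) (D j)) (hL : 3 * L ≤ g) {q : ℕ}
    (hq : q ≤ L * (n - 1)) :
    ∃ (f : β ↪ α) (F : Multiset (Finset α)), F.Nodup ∧ (∀ B ∈ F, B.card = 3) ∧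
      IsPairExtension f F₀ F lam (3 * q) := by
  classical
  obtain ⟨hS, -, hG, -, hGS, -⟩ := hA.1
  have hemb (i : Fin n) :
      ∃ f : β ↪ α, univ.map f = G i ∪ S ∧ ∀ b, f b ∈ S → b ∈ Y :=
    exists_embedding_map_univ_eq (hY.trans hS.symm) (by rw [hβ, (hG i).1, hS]) (hGS i)
  choose f hf hfY using hemb
  obtain ⟨m, hmL, hmq⟩ := exists_le_sum_eq (univ.erase i₀) (L := L) (q := q)
    (by simpa [Finset.card_erase_of_mem] using hq)
  choose E hE using fun i => exists_nodup_isSDesignOn_sum hD hDdisj (hmL i)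
  let c (i : Fin n) : ℕ := if i = i₀ then lam else 3 * m i
  let K (i : Fin n) : Multiset (Finset β) := if i = i₀ then F₀ else E i
  obtain ⟨F, hF, hF3, hext⟩ := hA.exists_isPairExtension_fillHoles hf hfY i₀ (c := c) (K := K)
    (fun i => by dsimp only [c]; split_ifs <;> linarith [hmL i])
    (fun i => by
      dsimp only [K]
      split_ifs
      exacts [⟨hF₀, hF₀3⟩, ⟨(hE i).1, fun B hB => ((hE i).2.1.1 B hB).1⟩])
    (fun i hi => by simpa [c, K, hi] using (hE i).2)
  have hsum : ∑ i ∈ univ.erase i₀, c i = 3 * q := by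
    rw [← hmq, Finset.mul_sum]
    exact Finset.sum_congr rfl fun i hi => if_neg (Finset.ne_of_mem_erase hi)
  refine ⟨f i₀, F, hF, hF3, ?_⟩
  simpa [c, K, hsum] using hext

theorem stmt_6_general (g s n c lam : ℕ) (e : ℤ)
    (hg3 : g % 3 = 0) (hs : s % 3 = 2) (hgge : 3 ≤ g) (hnge : 3 ≤ n)
    (hlam : lam = 1 ∨ lam = 2)
    (hPCS : ∃ (S : Finset (Fin (g * n + s))) (G : Fin n → Finset (Fin (g * n + s)))
        (A : Multiset (Finset (Fin (g * n + s)))),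
        IsPCS Finset.univ g n s S G A)
    (hdesigns : ∃ Y : Finset (Fin (g + s)), Y.card = s ∧
      ∃ D : Fin (if g = 3 then 1 else 2) → Multiset (Finset (Fin (g + s))),
        (∀ i, (D i).Nodup ∧ IsSDesignOn Finset.univ 3 (D i) ∧
          ∀ B ∈ D i, ¬ B ⊆ Y) ∧
        (∀ i j, i ≠ j → Disjoint (D i) (D j)))
    (hassoc : AssocPair (g + s) c lam e)
    (hNW : ∃ F : Multiset (Finset (Fin (g + s))),
        IsNWBTSOn Finset.univ (g + s) c F) :
    ∀ q : ℕ, q ≤ (if g = 3 then 1 else 2) * (n - 1) →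
      ∀ b' : ℕ, 3 * (b' : ℤ) = (lam : ℤ) * ((g * n + s).choose 2 : ℤ) + e →
        ∃ F : Multiset (Finset (Fin (g * n + s))),
          IsNWBTSOn Finset.univ (g * n + s) (q * (g * n + s).choose 2 + b') F := by
  intro q hq b' hb'
  obtain ⟨S, G, A, hPCS⟩ := hPCS
  obtain ⟨Y, hY, D, hD, hDdisj⟩ := hdesigns
  obtain ⟨F₀, ⟨-, rfl, hF₀3⟩, hbal, l, e₀, -, hassoc₀, hrange, hshape⟩ := hNW
  obtain ⟨rfl, rfl⟩ := AssocPair.unique (by omega) hassoc₀ hassoc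
  -- `g + s` is odd since an `S₃(2,3,g+s)` exists, so the small system is not in case (C2)
  have hu : Even (3 * (g + s - 1)) := by
    simpa using (hD ⟨0, by split_ifs <;> omega⟩).2.1.even_mul_card_sub_one ⟨0, by omega⟩
  have hv : Odd (g * n + s) := by
    simpa using hPCS.odd_card (by omega) (by omega)
  rw [Nat.even_mul, Nat.even_iff, Nat.even_iff] at hu
  rw [Nat.odd_iff] at hv
  have hC1 : C1ShapeOn univ F₀ l e₀ := by
    rcases hshape with ⟨-, h⟩ | ⟨⟨hu', -⟩, -⟩
    · exact h
    · omega
  have hF₀ : F₀.Nodup := nodup_of_threeBalancedOn (fun B hB => (hF₀3 B hB).1) hbal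
    (by simpa using hassoc₀.lt_choose_three (by omega) (by omega))
  obtain ⟨f, F, hF, hF3, hext⟩ := hPCS.exists_isPairExtension (by simp) hY ⟨0, by omega⟩ hF₀
    (fun B hB => (hF₀3 B hB).1) (lam := l) (by omega) hD hDdisj (by split_ifs <;> omega) hq
  have hgn : 3 ∣ g * n := Dvd.dvd.mul_right (Nat.dvd_of_mod_eq_zero hg3) n
  refine ⟨F, ?_⟩
  simpa using hext.isNWBTSOn hF hF3 (fun B hB => (hF₀3 B hB).1) (by simpa using hassoc₀)
    hrange hC1 (by simp; omega) (by omega) (by simpa using hb')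

/-- Construction via a PCS(g^n : s). -/
theorem stmt_6 (g s n c lam : ℕ) (e : ℤ)
    (hg3 : g % 3 = 0) (hs : s % 3 = 2) (hgge : 3 ≤ g) (hnge : 3 ≤ n)
    (hlam : lam = 1 ∨ lam = 2)
    (hPCS : ∃ (S : Finset (Fin (g * n + s))) (G : Fin n → Finset (Fin (g * n + s)))
        (A : Multiset (Finset (Fin (g * n + s)))),
        IsPCS Finset.univ g n s S G A)
    (hdesigns : ∃ Y : Finset (Fin (g + s)), Y.card = s ∧
      ∃ D : Fin (if g = 3 then 1 else 2) → Multiset (Finset (Fin (g + s))),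
        (∀ i, (D i).Nodup ∧ IsSDesignOn Finset.univ 3 (D i) ∧
          ∀ B ∈ D i, ¬ B ⊆ Y) ∧
        (∀ i j, i ≠ j → Disjoint (D i) (D j)))
    (hC1 : CondC1 (g + s) c) (hassoc : AssocPair (g + s) c lam e)
    (hNW : ∃ F : Multiset (Finset (Fin (g + s))),
        IsNWBTSOn Finset.univ (g + s) c F) :
    ∀ q : ℕ, q ≤ (if g = 3 then 1 else 2) * (n - 1) →
      ∀ b' : ℕ, 3 * (b' : ℤ) = (lam : ℤ) * ((g * n + s).choose 2 : ℤ) + e →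
        ∃ F : Multiset (Finset (Fin (g * n + s))),
          IsNWBTSOn Finset.univ (g * n + s) (q * (g * n + s).choose 2 + b') F :=
  stmt_6_general g s n c lam e hg3 hs hgge hnge hlam hPCS hdesigns hassoc hNW

end DataPlacement
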